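/- Let X be a complex Banach space, let J be either ℝ or [0,∞), and let φ : J → X be uniformly continuous. If Δ_hφ is Maak ergodic for some h > 0, then Δ_sφ is Maak ergodic for every s > 0. -/

import Mathlib

/-!
If `Δ_h φ` has mean `M`, then `Δ_{ph} φ (t) = ∑_{a < p} Δ_h φ (t + a h)` has mean `p M`, with the
same averaging sets. Given `r > 0`, Dirichlet's theorem gives `q, p` with `q r ≈ p h`, so by uniform
continuity `Δ_{qρ} φ` is uniformly close to `Δ_{ph} φ` for every `ρ` close enough to `r`. Since
`∑_{a < q} Δ_ρ φ (t + a ρ)` telescopes to `Δ_{qρ} φ (t)`, an averaging set `F` for `Δ_{qρ} φ` yields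
the averaging set `F + {0, ρ, …, (q - 1) ρ}` for `Δ_ρ φ`, with `1 / q` times the mean; `ρ` is
perturbed so that these `q |F|` points are distinct. Finally `Δ_ρ φ` is uniformly close to `Δ_r φ`,
so `Δ_r φ` has mean `(r / h) M`.
-/

/-- The difference operator `Δ_h f (t) = f (t + h) - f t`. -/
def fdiff {G X : Type*} [Add G] [Sub X] (h : G) (f : G → X) : G → X :=
  fun t => f (t + h) - f t

/-- `ψ : J → X` is Maak ergodic with mean `M`. -/
def MaakOn {G : Type*} [AddCommMonoid G] {X : Type*} [NormedAddCommGroup X] [Module ℝ X]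
    (J : Set G) (ψ : G → X) (M : X) : Prop :=
  ∀ ε > 0, ∃ F : Finset G, F.Nonempty ∧ ↑F ⊆ J ∧
    ∀ s ∈ J, ‖(F.card : ℝ)⁻¹ • (∑ u ∈ F, ψ (u + s)) - M‖ < ε

open Finset

def IsMaakSet {G X : Type*} [AddCommMonoid G] [NormedAddCommGroup X] [Module ℝ X]
    (J : Set G) (ψ : G → X) (M : X) (ε : ℝ) (F : Finset G) : Prop :=
  F.Nonempty ∧ ↑F ⊆ J ∧ ∀ s ∈ J, ‖(F.card : ℝ)⁻¹ • (∑ u ∈ F, ψ (u + s)) - M‖ < ε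

theorem maakOn_iff_forall_isMaakSet {G X : Type*} [AddCommMonoid G] [NormedAddCommGroup X]
    [Module ℝ X] {J : Set G} {ψ : G → X} {M : X} :
    MaakOn J ψ M ↔ ∀ ε > 0, ∃ F, IsMaakSet J ψ M ε F :=
  Iff.rfl

theorem fdiff_nsmul_eq_sum {G X : Type*} [AddCommMonoid G] [AddCommGroup X] (n : ℕ) (h : G)
    (φ : G → X) (t : G) : fdiff (n • h) φ t = ∑ a ∈ range n, fdiff h φ (t + a • h) := by
  have hstep : ∀ a : ℕ, fdiff h φ (t + a • h) = φ (t + (a + 1) • h) - φ (t + a • h) := fun a => by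
    rw [fdiff, succ_nsmul, add_assoc]
  rw [sum_congr rfl fun a _ => hstep a, sum_range_sub (fun a : ℕ => φ (t + a • h)), zero_smul,
    add_zero, fdiff]

theorem norm_inv_card_smul_sum_le {ι X : Type*} [NormedAddCommGroup X] [NormedSpace ℝ X]
    {F : Finset ι} (hF : F.Nonempty) {f : ι → X} {η : ℝ} (hf : ∀ i ∈ F, ‖f i‖ ≤ η) :
    ‖(F.card : ℝ)⁻¹ • ∑ i ∈ F, f i‖ ≤ η := by
  have hcard : (0 : ℝ) < F.card := by exact_mod_cast hF.card_pos
  rw [norm_smul, norm_inv, Real.norm_natCast, inv_mul_le_iff₀ hcard]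
  simpa using norm_sum_le_of_le F hf

section Maak

variable {G X : Type*} [AddCommMonoid G] [NormedAddCommGroup X] [NormedSpace ℝ X]
  {J : AddSubmonoid G} {ψ ψ' : G → X} {M M' : X} {ε ε' η : ℝ} {F : Finset G}

theorem IsMaakSet.mono (hF : IsMaakSet J ψ M ε F) (hε : ε ≤ ε') : IsMaakSet J ψ M ε' F :=
  ⟨hF.1, hF.2.1, fun s hs => (hF.2.2 s hs).trans_le hε⟩

theorem IsMaakSet.of_norm_sub_le (hF : IsMaakSet J ψ M ε F)
    (hψ : ∀ t ∈ J, ‖ψ' t - ψ t‖ ≤ η) : IsMaakSet J ψ' M (ε + η) F := by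
  refine ⟨hF.1, hF.2.1, fun s hs => ?_⟩
  have hclose : ‖(F.card : ℝ)⁻¹ • ∑ u ∈ F, (ψ' (u + s) - ψ (u + s))‖ ≤ η :=
    norm_inv_card_smul_sum_le hF.1 fun u hu => hψ _ (J.add_mem (hF.2.1 hu) hs)
  rw [sum_sub_distrib, smul_sub] at hclose
  calc _ = ‖((F.card : ℝ)⁻¹ • ∑ u ∈ F, ψ (u + s) - M)
          + ((F.card : ℝ)⁻¹ • ∑ u ∈ F, ψ' (u + s) - (F.card : ℝ)⁻¹ • ∑ u ∈ F, ψ (u + s))‖ := by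
        congr 1; abel
    _ ≤ _ := norm_add_le _ _
    _ < ε + η := add_lt_add_of_lt_of_le (hF.2.2 s hs) hclose

theorem IsMaakSet.of_norm_sub_mean_le (hF : IsMaakSet J ψ M ε F) (hM : ‖M - M'‖ ≤ η) :
    IsMaakSet J ψ M' (ε + η) F := by
  refine ⟨hF.1, hF.2.1, fun s hs => ?_⟩
  calc _ = ‖((F.card : ℝ)⁻¹ • ∑ u ∈ F, ψ (u + s) - M) + (M - M')‖ := by congr 1; abel
    _ ≤ _ := norm_add_le _ _
    _ < ε + η := add_lt_add_of_lt_of_le (hF.2.2 s hs) hM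

theorem MaakOn.sum_translates {ι : Type*} (hψ : MaakOn J ψ M) (S : Finset ι) (c : ι → G)
    (hc : ∀ i ∈ S, c i ∈ J) : MaakOn J (fun t => ∑ i ∈ S, ψ (t + c i)) (S.card • M) := by
  intro ε hε
  obtain ⟨F, hFne, hFJ, hF⟩ := hψ (ε / (S.card + 1)) (by positivity)
  refine ⟨F, hFne, hFJ, fun s hs => ?_⟩
  have hsplit : (F.card : ℝ)⁻¹ • ∑ u ∈ F, ∑ i ∈ S, ψ (u + s + c i) - S.card • M
      = ∑ i ∈ S, ((F.card : ℝ)⁻¹ • ∑ u ∈ F, ψ (u + (s + c i)) - M) := by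
    simp only [sum_sub_distrib, sum_const, smul_sum, add_assoc]
    rw [sum_comm]
  rw [hsplit]
  calc _ ≤ ∑ _i ∈ S, ε / (S.card + 1) :=
        norm_sum_le_of_le S fun i hi => (hF _ (J.add_mem hs (hc i hi))).le
    _ = S.card * ε / (S.card + 1) := by rw [sum_const, nsmul_eq_mul, mul_div_assoc]
    _ < ε := by rw [div_lt_iff₀ (by positivity)]; nlinarith

theorem MaakOn.fdiff_nsmul {φ : G → X} {h : G} (hM : MaakOn J (fdiff h φ) M) (hh : h ∈ J)
    (n : ℕ) : MaakOn J (fdiff (n • h) φ) (n • M) := by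
  have := hM.sum_translates (range n) (· • h) fun a _ => J.nsmul_mem hh a
  rwa [card_range, ← funext (fdiff_nsmul_eq_sum n h φ)] at this

theorem IsMaakSet.image_add_nsmul [DecidableEq G] {φ : G → X} {ρ : G} {q : ℕ} {N : X}
    (hF : IsMaakSet J (fdiff (q • ρ) φ) N ε F) (hρ : ρ ∈ J) (hq : 0 < q)
    (hinj : Set.InjOn (fun x : G × ℕ => x.1 + x.2 • ρ) ↑(F ×ˢ range q)) :
    IsMaakSet J (fdiff ρ φ) ((q : ℝ)⁻¹ • N) ((q : ℝ)⁻¹ * ε)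
      ((F ×ˢ range q).image fun x => x.1 + x.2 • ρ) := by
  obtain ⟨hFne, hFJ, hF⟩ := hF
  refine ⟨(hFne.product (nonempty_range_iff.2 hq.ne')).image _, ?_, fun s hs => ?_⟩
  · intro v hv
    obtain ⟨⟨u, a⟩, hua, rfl⟩ := mem_image.1 (mem_coe.1 hv)
    exact J.add_mem (hFJ (mem_product.1 hua).1) (J.nsmul_mem hρ a)
  have hsum : ∑ v ∈ (F ×ˢ range q).image (fun x => x.1 + x.2 • ρ), fdiff ρ φ (v + s)
      = ∑ u ∈ F, fdiff (q • ρ) φ (u + s) := by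
    rw [sum_image hinj, sum_product]
    refine sum_congr rfl fun u _ => ?_
    rw [fdiff_nsmul_eq_sum]
    exact sum_congr rfl fun a _ => by rw [add_right_comm]
  have hq' : (0 : ℝ) < q := by exact_mod_cast hq
  rw [hsum, card_image_of_injOn hinj, card_product, card_range, Nat.cast_mul, mul_inv,
    mul_comm, ← smul_smul, ← smul_sub, norm_smul, norm_inv, Real.norm_natCast]
  exact mul_lt_mul_of_pos_left (hF s hs) (inv_pos.2 hq')

end Maak

theorem exists_nat_abs_mul_sub_lt {ξ δ : ℝ} (hξ : 0 ≤ ξ) (hδ : 0 < δ) :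
    ∃ q p : ℕ, 0 < q ∧ |q * ξ - p| < δ := by
  obtain ⟨n, hn⟩ := exists_nat_gt δ⁻¹
  have hn0 : 0 < n := by exact_mod_cast (inv_pos.2 hδ).trans hn
  obtain ⟨q, hq, -, hqξ⟩ := Real.exists_nat_abs_mul_sub_round_le ξ hn0
  have hround : ((round (q * ξ)).toNat : ℝ) = round (q * ξ) := by
    exact_mod_cast Int.toNat_of_nonneg (by rw [round_eq, Int.floor_nonneg]; positivity)
  refine ⟨q, (round (q * ξ)).toNat, hq, ?_⟩
  rw [hround]
  refine hqξ.trans_lt ?_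
  rw [div_lt_iff₀ (by positivity), ← div_lt_iff₀' hδ, one_div]
  linarith

theorem exists_nat_abs_mul_sub_mul_lt {r h δ : ℝ} (hr : 0 ≤ r) (hh : 0 < h) (hδ : 0 < δ) :
    ∃ q p : ℕ, 0 < q ∧ |q * r - p * h| < δ ∧ |p / q - r / h| < δ := by
  obtain ⟨q, p, hq, hqp⟩ := exists_nat_abs_mul_sub_lt (div_nonneg hr hh.le)
    (by positivity : 0 < δ / (h + 1))
  have hq' : (1 : ℝ) ≤ q := by exact_mod_cast hq
  have hδh : δ / (h + 1) * (h + 1) = δ := div_mul_cancel₀ δ (by positivity)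
  refine ⟨q, p, hq, ?_, ?_⟩
  · calc |q * r - p * h| = h * |q * (r / h) - p| := by
          rw [← abs_of_pos hh, ← abs_mul, abs_of_pos hh]
          congr 1
          field_simp
      _ ≤ h * (δ / (h + 1)) := by gcongr
      _ < δ := by nlinarith
  · calc |p / q - r / h| = (q : ℝ)⁻¹ * |q * (r / h) - p| := by
          rw [← abs_of_pos (inv_pos.2 (by positivity : (0 : ℝ) < q)), ← abs_mul, abs_sub_comm]
          congr 1
          field_simp
      _ ≤ 1 * (δ / (h + 1)) := by gcongr; exact inv_le_one_of_one_le₀ hq'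
      _ < δ := by nlinarith

theorem exists_injOn_add_nsmul (F : Finset ℝ) (q : ℕ) {a b : ℝ} (hab : a < b) :
    ∃ ρ ∈ Set.Ioo a b, Set.InjOn (fun x : ℝ × ℕ => x.1 + x.2 • ρ) ↑(F ×ˢ range q) := by
  classical
  set B : Finset ℝ :=
    ((F ×ˢ F) ×ˢ (range q ×ˢ range q)).image fun x => (x.1.1 - x.1.2) / ((x.2.2 : ℝ) - x.2.1)
  obtain ⟨ρ, hρ, hρB⟩ := ((Set.Ioo_infinite hab).sdiff B.finite_toSet).nonempty
  refine ⟨ρ, hρ, ?_⟩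
  rintro ⟨u, i⟩ hx ⟨v, j⟩ hy (huv : u + i • ρ = v + j • ρ)
  simp only [coe_product, Set.mem_prod, mem_coe] at hx hy
  obtain rfl | hij := eq_or_ne i j
  · simpa using huv
  · have hji : (j : ℝ) - i ≠ 0 := sub_ne_zero.2 (Nat.cast_injective.ne hij.symm)
    refine absurd (mem_coe.2 (mem_image.2 ⟨((u, v), (i, j)), by simp [*], ?_⟩)) hρB
    rw [nsmul_eq_mul, nsmul_eq_mul] at huv
    field_simp
    linarith

theorem UniformContinuousOn.exists_norm_fdiff_sub_fdiff_le {X : Type*} [NormedAddCommGroup X]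
    {J : AddSubmonoid ℝ} (hJ : ∀ c, 0 ≤ c → c ∈ J) {φ : ℝ → X} (hφ : UniformContinuousOn φ J)
    (ε : ℝ) (hε : 0 < ε) : ∃ δ > 0, ∀ a b, 0 ≤ a → 0 ≤ b → |a - b| < δ →
      ∀ x ∈ J, ‖fdiff a φ x - fdiff b φ x‖ ≤ ε := by
  obtain ⟨δ, hδ, hφδ⟩ := Metric.uniformContinuousOn_iff.1 hφ ε hε
  refine ⟨δ, hδ, fun a b ha hb hab x hx => ?_⟩
  have hφab := hφδ (x + a) (J.add_mem hx (hJ a ha)) (x + b) (J.add_mem hx (hJ b hb))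
    (by rwa [Real.dist_eq, add_sub_add_left_eq_sub])
  rw [dist_eq_norm] at hφab
  simpa only [fdiff, sub_sub_sub_cancel_right] using hφab.le

theorem maakOn_fdiff_of_approx {X : Type*} [NormedAddCommGroup X] [NormedSpace ℝ X]
    {J : AddSubmonoid ℝ} (hJ : ∀ c, 0 ≤ c → c ∈ J) {φ : ℝ → X}
    (hφ : UniformContinuousOn φ J) {r : ℝ} (hr : 0 ≤ r) {L : X}
    (happrox : ∀ δ > 0, ∃ (q : ℕ) (t : ℝ) (N : X), 0 < q ∧ 0 ≤ t ∧ |q * r - t| < δ ∧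
      ‖(q : ℝ)⁻¹ • N - L‖ < δ ∧ MaakOn J (fdiff t φ) N) :
    MaakOn J (fdiff r φ) L := by
  rw [maakOn_iff_forall_isMaakSet]
  intro ε hε
  obtain ⟨δ, hδ, hclose⟩ := hφ.exists_norm_fdiff_sub_fdiff_le hJ (ε / 4) (by positivity)
  obtain ⟨q, t, N, hq, ht, hqt, hN, hNerg⟩ := happrox (min (δ / 2) (ε / 4)) (by positivity)
  have hq' : (0 : ℝ) < q := by exact_mod_cast hq
  have hq1 : (1 : ℝ) ≤ q := by exact_mod_cast hq
  obtain ⟨F, hF⟩ := maakOn_iff_forall_isMaakSet.1 hNerg (ε / 4) (by positivity)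
  obtain ⟨ρ, ⟨hρ_gt, hρ_lt⟩, hinj⟩ :=
    exists_injOn_add_nsmul F q (lt_add_of_pos_right r (by positivity : 0 < δ / 2 / q))
  have hqρ_sub : (q : ℝ) * (ρ - r) < δ / 2 := (lt_div_iff₀' hq').1 (by linarith)
  have hρ_sub : ρ - r < δ := by nlinarith
  have hqρ : |q • ρ - t| < δ := by
    have hqt' := abs_lt.1 (hqt.trans_le (min_le_left _ _))
    rw [nsmul_eq_mul, abs_lt]
    constructor <;> nlinarith
  have hFqρ := hF.of_norm_sub_le (hclose _ _ (nsmul_nonneg (by linarith) q) ht hqρ)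
  have hGρ := hFqρ.image_add_nsmul (hJ ρ (by linarith)) hq hinj
  have hrρ : |r - ρ| < δ := by rw [abs_sub_lt_iff]; constructor <;> linarith
  have hGr := (hGρ.of_norm_sub_le (hclose r ρ hr (by linarith) hrρ)).of_norm_sub_mean_le
    (hN.le.trans (min_le_right _ _))
  refine ⟨_, hGr.mono ?_⟩
  have : (q : ℝ)⁻¹ ≤ 1 := inv_le_one_of_one_le₀ hq1
  nlinarith

theorem delta_ergodic_all_of_one_general
    {X : Type*} [NormedAddCommGroup X] [NormedSpace ℂ X]
    (J : Set ℝ) (hJ : J = Set.univ ∨ J = Set.Ici (0 : ℝ))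
    (φ : ℝ → X) (hφ_uc : UniformContinuousOn φ J)
    (h : ℝ) (hh : 0 < h) (hE : ∃ M, MaakOn J (fdiff h φ) M) :
    ∀ s : ℝ, 0 < s → ∃ M, MaakOn J (fdiff s φ) M := by
  obtain ⟨J, rfl, hJ_nonneg⟩ : ∃ J' : AddSubmonoid ℝ, (J' : Set ℝ) = J ∧ ∀ c, 0 ≤ c → c ∈ J' := by
    rcases hJ with rfl | rfl
    exacts [⟨⊤, AddSubmonoid.coe_top, fun _ _ => trivial⟩,
      ⟨.nonneg ℝ, AddSubmonoid.coe_nonneg ℝ, fun _ => id⟩]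
  obtain ⟨M, hM⟩ := hE
  intro r hr
  refine ⟨(r / h) • M, maakOn_fdiff_of_approx hJ_nonneg hφ_uc hr.le fun δ hδ => ?_⟩
  obtain ⟨q, p, hq, hqp, hpq⟩ :=
    exists_nat_abs_mul_sub_mul_lt hr.le hh (by positivity : 0 < δ / (‖M‖ + 1))
  refine ⟨q, p • h, p • M, hq, by positivity, ?_, ?_, hM.fdiff_nsmul (hJ_nonneg h hh.le) p⟩
  · rw [nsmul_eq_mul]
    exact hqp.trans_le (div_le_self hδ.le (by linarith [norm_nonneg M]))
  · calc ‖(q : ℝ)⁻¹ • p • M - (r / h) • M‖ = |p / q - r / h| * ‖M‖ := by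
          rw [← Nat.cast_smul_eq_nsmul ℝ, smul_smul, ← sub_smul, norm_smul, Real.norm_eq_abs,
            inv_mul_eq_div]
      _ ≤ δ / (‖M‖ + 1) * ‖M‖ := by gcongr
      _ < δ / (‖M‖ + 1) * (‖M‖ + 1) := by gcongr; linarith
      _ = δ := div_mul_cancel₀ δ (by positivity)

/-- Corollary 4.6: for `J = ℝ` or `J = [0,∞)` and `φ : J → X` uniformly
continuous, if `Δ_hφ` is Maak ergodic for some `h > 0` then `Δ_sφ` is Maak ergodic
for every `s > 0`. -/
theorem delta_ergodic_all_of_one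
    {X : Type*} [NormedAddCommGroup X] [NormedSpace ℂ X] [CompleteSpace X]
    (J : Set ℝ) (hJ : J = Set.univ ∨ J = Set.Ici (0 : ℝ))
    (φ : ℝ → X) (hφ_uc : UniformContinuousOn φ J)
    (h : ℝ) (hh : 0 < h) (hE : ∃ M, MaakOn J (fdiff h φ) M) :
    ∀ s : ℝ, 0 < s → ∃ M, MaakOn J (fdiff s φ) M :=
  delta_ergodic_all_of_one_general J hJ φ hφ_uc h hh hE
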